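/- arXiv:1907.06908 — 7 statements merged into one kernel-verified Lean document; each statement's English description precedes it below -/
import Mathlib

section
/- If d ≥ 0 then k11(η) > 0. (In particular, the sun-pointing attitude stability condition k11(η) > 0 holds for every position of the bus in front of the sail.) -/
/-! With `c = cos α`, the double- and triple-angle formulas give
`2η cos 2α + η + 1 = 1 - η + 4ηc²` and `cos α - η cos 3α = c (1 + 3η - 4ηc²) ≥ c (1 - η)`,
so for `0 ≤ η < 1` and `0 < c` the first bracket is nonnegative and the second positive;
with `d ≥ 0` and `sin α > 0` every term of `k11` then has the right sign. -/

open Real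

/-- Solar-radiation-pressure torque coefficient `k11`. -/
noncomputable def k11 (w mb ms d α η : ℝ) : ℝ :=
  Real.sin α * (2 * d * mb * (2 * η * Real.cos (2 * α) + η + 1) +
    w * (mb + ms) * (Real.cos α - η * Real.cos (3 * α)))

lemma two_mul_mul_cos_two_mul_add_add_one_nonneg {η : ℝ} (hη0 : 0 ≤ η) (hη1 : η ≤ 1) (α : ℝ) :
    0 ≤ 2 * η * cos (2 * α) + η + 1 := by
  rw [cos_two_mul]
  nlinarith [mul_nonneg hη0 (sq_nonneg (cos α))]

lemma cos_sub_mul_cos_three_mul_pos {η α : ℝ} (hη0 : 0 ≤ η) (hη1 : η < 1) (hc : 0 < cos α) :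
    0 < cos α - η * cos (3 * α) := by
  have hsq : cos α ^ 2 ≤ 1 := cos_sq_le_one α
  have key : cos α - η * cos (3 * α) = cos α * ((1 - η) + 4 * η * (1 - cos α ^ 2)) := by
    rw [cos_three_mul]; ring
  rw [key]
  exact mul_pos hc (by nlinarith [mul_nonneg hη0 (sub_nonneg.2 hsq)])

theorem stmt2 (w mb ms d α η : ℝ) (hw : 0 < w) (hmb : 0 < mb) (hms : 0 < ms)
    (hα : α ∈ Set.Ioo 0 (π / 2)) (hη : η ∈ Set.Ioo (0:ℝ) 1) (hd : d ≥ 0) :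
    k11 w mb ms d α η > 0 := by
  obtain ⟨hα0, hα2⟩ := hα
  obtain ⟨hη0, hη1⟩ := hη
  have hsin : 0 < sin α := sin_pos_of_pos_of_lt_pi hα0 (by linarith [pi_pos])
  have hcos : 0 < cos α := cos_pos_of_mem_Ioo ⟨by linarith [pi_pos], hα2⟩
  have hA := two_mul_mul_cos_two_mul_add_add_one_nonneg hη0.le hη1.le α
  have hB := cos_sub_mul_cos_three_mul_pos hη0.le hη1 hcos
  unfold k11
  exact mul_pos hsin (add_pos_of_nonneg_of_pos (by positivity) (by positivity))
end

section
/- If k11(η) ≠ 0, then M0plus(α) = 0 and M0minus(−α) = 0; that is, the scaled torque produced by a sail panel vanishes exactly at the switching angle where that panel becomes edge-on to the sunlight. -/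
open Real

/-- Torque coefficient `k20`. -/
noncomputable def k20 (w mb ms d α η : ℝ) : ℝ :=
  Real.sin α ^ 2 * (4 * d * η * mb * Real.cos α +
    w * (mb + ms) * (1 - η * Real.cos (2 * α)))

/-- Torque coefficient `k02`. -/
noncomputable def k02 (w mb ms d α η : ℝ) : ℝ :=
  Real.cos α * (2 * d * mb * (η * Real.cos (2 * α) + 1) +
    η * w * (mb + ms) * Real.sin α * Real.sin (2 * α))

/-- Scaled torque produced by panel `P₊`. -/
noncomputable def M0plus (w mb ms d α η : ℝ) (ψ : ℝ) : ℝ :=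
  -(1 / 2) * Real.sin (2 * ψ)
    + (k20 w mb ms d α η / k11 w mb ms d α η) * Real.cos ψ ^ 2
    + (k02 w mb ms d α η / k11 w mb ms d α η) * Real.sin ψ ^ 2

/-- Scaled torque produced by panel `P₋`. -/
noncomputable def M0minus (w mb ms d α η : ℝ) (ψ : ℝ) : ℝ :=
  -(1 / 2) * Real.sin (2 * ψ)
    - (k20 w mb ms d α η / k11 w mb ms d α η) * Real.cos ψ ^ 2
    - (k02 w mb ms d α η / k11 w mb ms d α η) * Real.sin ψ ^ 2

/-- Piecewise scaled torque `M1`. -/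
noncomputable def M1 (w mb ms d α η : ℝ) (ψ : ℝ) : ℝ :=
  Set.indicator (Set.Icc (-α) (Real.pi - α)) (M0minus w mb ms d α η) ψ +
  Set.indicator (Set.Icc (-Real.pi + α) α) (M0plus w mb ms d α η) ψ

/-! At the edge-on angle `ψ = α` the coefficients satisfy
`k20 cos² α + k02 sin² α = sin α cos α · k11`, which is exactly the vanishing of `M0plus α`
after multiplying by `k11`. The panel `P₋` is the mirror image of `P₊`
(`M0minus ψ = -M0plus (-ψ)`), so `M0minus (-α) = 0` follows. -/

theorem k20_mul_cos_sq_add_k02_mul_sin_sq (w mb ms d α η : ℝ) :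
    k20 w mb ms d α η * cos α ^ 2 + k02 w mb ms d α η * sin α ^ 2 =
      sin α * cos α * k11 w mb ms d α η := by
  rw [k20, k02, k11, cos_two_mul, cos_three_mul, sin_two_mul]
  -- the `d`-terms agree identically; the `w`-terms differ by `2ηw(mb+ms) s²c² (s² + c² - 1)`
  linear_combination (2 * η * w * (mb + ms) * sin α ^ 2 * cos α ^ 2) * sin_sq_add_cos_sq α

theorem M0plus_self {w mb ms d α η : ℝ} (hk : k11 w mb ms d α η ≠ 0) :
    M0plus w mb ms d α η α = 0 := by
  have key := k20_mul_cos_sq_add_k02_mul_sin_sq w mb ms d α η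
  rw [M0plus, sin_two_mul]
  field_simp
  linear_combination key

theorem M0minus_eq_neg_M0plus_neg (w mb ms d α η ψ : ℝ) :
    M0minus w mb ms d α η ψ = -M0plus w mb ms d α η (-ψ) := by
  simp only [M0minus, M0plus, mul_neg, sin_neg, cos_neg, neg_sq]
  ring

theorem stmt5_general (w mb ms d α η : ℝ)
    (hk : k11 w mb ms d α η ≠ 0) :
    M0plus w mb ms d α η α = 0 ∧ M0minus w mb ms d α η (-α) = 0 := by
  refine ⟨M0plus_self hk, ?_⟩
  rw [M0minus_eq_neg_M0plus_neg, neg_neg, M0plus_self hk, neg_zero]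

theorem stmt5 (w mb ms d α η : ℝ) (hw : 0 < w) (hmb : 0 < mb) (hms : 0 < ms)
    (hα : α ∈ Set.Ioo 0 (π / 2)) (hη : η ∈ Set.Ioo (0:ℝ) 1)
    (hk : k11 w mb ms d α η ≠ 0) :
    M0plus w mb ms d α η α = 0 ∧ M0minus w mb ms d α η (-α) = 0 :=
  stmt5_general w mb ms d α η hk
end

section
/- If k11(η) ≠ 0, then M0minus(π − α) = 0 and M0plus(−π + α) = 0; consequently M1(π − α) = 0 and M1(−π + α) = 0, i.e. the hyperbolic-type attitudes H± = (±(π − α), 0) are equilibria of the system φ' = Φ, Φ' = M1(φ). -/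
open Real

lemma key_id (w mb ms d α η : ℝ) :
    k20 w mb ms d α η * Real.cos α ^ 2 + k02 w mb ms d α η * Real.sin α ^ 2
      = Real.sin α * Real.cos α * k11 w mb ms d α η := by
  unfold k11 k20 k02
  rw [Real.cos_three_mul, Real.cos_two_mul, Real.sin_two_mul]
  have h := Real.sin_sq_add_cos_sq α
  linear_combination (2 * η * w * (mb + ms) * Real.sin α ^ 2 * Real.cos α ^ 2) * h

theorem stmt6 (w mb ms d α η : ℝ) (hw : 0 < w) (hmb : 0 < mb) (hms : 0 < ms)
    (hα : α ∈ Set.Ioo 0 (π / 2)) (hη : η ∈ Set.Ioo (0:ℝ) 1)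
    (hk : k11 w mb ms d α η ≠ 0) :
    M0minus w mb ms d α η (π - α) = 0 ∧ M0plus w mb ms d α η (-π + α) = 0 ∧
    M1 w mb ms d α η (π - α) = 0 ∧ M1 w mb ms d α η (-π + α) = 0 := by
  obtain ⟨hα0, hα2⟩ := hα
  have hπ := Real.pi_pos
  have hminus : M0minus w mb ms d α η (π - α) = 0 := by
    have h1 : Real.sin (2 * (π - α)) = -Real.sin (2 * α) := by
      have : 2 * (π - α) = 2 * π - 2 * α := by ring
      rw [this, Real.sin_sub, Real.sin_two_pi, Real.cos_two_pi]; ring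
    have h2 : Real.cos (π - α) = -Real.cos α := Real.cos_pi_sub α
    have h3 : Real.sin (π - α) = Real.sin α := Real.sin_pi_sub α
    have key := key_id w mb ms d α η
    unfold M0minus
    rw [h1, h2, h3, Real.sin_two_mul]
    field_simp
    linear_combination (-1 : ℝ) * key
  have hplus : M0plus w mb ms d α η (-π + α) = 0 := by
    have e : -π + α = -(π - α) := by ring
    have h1 : Real.sin (2 * (-π + α)) = Real.sin (2 * α) := by
      have : 2 * (-π + α) = 2 * α - 2 * π := by ring
      rw [this, Real.sin_sub, Real.sin_two_pi, Real.cos_two_pi]; ring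
    have h2 : Real.cos (-π + α) = -Real.cos α := by
      rw [e, Real.cos_neg, Real.cos_pi_sub]
    have h3 : Real.sin (-π + α) = -Real.sin α := by
      rw [e, Real.sin_neg, Real.sin_pi_sub]
    have key := key_id w mb ms d α η
    unfold M0plus
    rw [h1, h2, h3, Real.sin_two_mul]
    field_simp
    linear_combination key
  refine ⟨hminus, hplus, ?_, ?_⟩
  · unfold M1
    rw [Set.indicator_of_mem, Set.indicator_of_notMem, hminus, add_zero]
    · intro h
      have := h.2
      linarith
    · exact ⟨by linarith, le_refl _⟩
  · unfold M1
    rw [Set.indicator_of_notMem, Set.indicator_of_mem, hplus, zero_add]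
    · exact ⟨le_refl _, by linarith⟩
    · intro h
      have := h.1
      linarith
end

section
/- If k11(η) ≠ 0, the scaled torque M1 is an odd function: M1(−ψ) = −M1(ψ) for every ψ ∈ ℝ (so the phase space of the system φ' = Φ, Φ' = M1(φ) is symmetric with respect to φ = 0). -/
open Real

/-! Reflection `ψ ↦ -ψ` exchanges the two panel intervals `[-α, π - α]` and `[-π + α, α]`, and
it carries `M0minus` to `-M0plus` (and back), since `sin (2ψ)` is odd while `cos² ψ`, `sin² ψ` are
even. Hence the two summands of `M1` are swapped with a sign change. -/

open Set

theorem indicator_Icc_neg_apply {α β : Type*} [AddCommGroup α] [LinearOrder α]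
    [IsOrderedAddMonoid α] [NegZeroClass β] {f g : α → β} (hfg : ∀ x, f (-x) = -g x)
    (a b x : α) : (Icc a b).indicator f (-x) = -(Icc (-b) (-a)).indicator g x := by
  have hmem : -x ∈ Icc a b ↔ x ∈ Icc (-b) (-a) := by
    rw [← neg_mem_neg, neg_Icc, neg_neg]
  by_cases hx : x ∈ Icc (-b) (-a)
  · rw [indicator_of_mem (hmem.mpr hx), indicator_of_mem hx, hfg]
  · rw [indicator_of_notMem (mt hmem.mp hx), indicator_of_notMem hx, neg_zero]

section Torque

variable (w mb ms d α η : ℝ)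

theorem M0minus_neg (ψ : ℝ) : M0minus w mb ms d α η (-ψ) = -M0plus w mb ms d α η ψ := by
  simp only [M0minus, M0plus, mul_neg, Real.sin_neg, Real.cos_neg, neg_sq]
  ring

theorem M0plus_neg (ψ : ℝ) : M0plus w mb ms d α η (-ψ) = -M0minus w mb ms d α η ψ := by
  rw [← neg_neg ψ, M0minus_neg, neg_neg, neg_neg]

end Torque

theorem stmt8_general (w mb ms d α η : ℝ) :
    ∀ ψ : ℝ, M1 w mb ms d α η (-ψ) = -M1 w mb ms d α η ψ := by
  intro ψ
  have hreflect : -(-π + α) = π - α := by ring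
  rw [M1, M1, indicator_Icc_neg_apply (M0minus_neg w mb ms d α η),
    indicator_Icc_neg_apply (M0plus_neg w mb ms d α η), neg_sub, hreflect, sub_eq_neg_add, neg_neg,
    neg_add_rev]

theorem stmt8 (w mb ms d α η : ℝ) (hw : 0 < w) (hmb : 0 < mb) (hms : 0 < ms)
    (hα : α ∈ Set.Ioo 0 (π / 2)) (hη : η ∈ Set.Ioo (0:ℝ) 1)
    (hk : k11 w mb ms d α η ≠ 0) :
    ∀ ψ : ℝ, M1 w mb ms d α η (-ψ) = -M1 w mb ms d α η ψ :=
  stmt8_general w mb ms d α η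
end

section
/- If k11(η) ≠ 0, then for every ψ ∈ ℝ the function K0 satisfies the derivative identities (d/dψ) K0(ψ) = −M0plus(ψ) and (d/dψ)[K0(−ψ)] = −M0minus(ψ); that is, K0 and its reflection are antiderivatives of the (negated) single-panel scaled torques, which yields the Hamiltonian structure of the unperturbed attitude system. -/
open Real

/-- Antiderivative `K0` giving the Hamiltonian structure. -/
noncomputable def K0 (w mb ms d α η : ℝ) (ψ : ℝ) : ℝ :=
  -((1 / 4) * Real.cos (2 * ψ) + (1 / (4 * k11 w mb ms d α η)) *
    ((k20 w mb ms d α η - k02 w mb ms d α η) * Real.sin (2 * ψ) +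
      2 * (k20 w mb ms d α η + k02 w mb ms d α η) * ψ))

theorem stmt10 (w mb ms d α η : ℝ) (hw : 0 < w) (hmb : 0 < mb) (hms : 0 < ms)
    (hα : α ∈ Set.Ioo 0 (π / 2)) (hη : η ∈ Set.Ioo (0:ℝ) 1)
    (hk : k11 w mb ms d α η ≠ 0) :
    ∀ ψ : ℝ,
      HasDerivAt (K0 w mb ms d α η) (-(M0plus w mb ms d α η ψ)) ψ ∧
      HasDerivAt (fun t => K0 w mb ms d α η (-t)) (-(M0minus w mb ms d α η ψ)) ψ := by
  set K := k11 w mb ms d α η with hK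
  set A := k20 w mb ms d α η with hA
  set B := k02 w mb ms d α η with hB
  have key : ∀ x : ℝ, HasDerivAt (K0 w mb ms d α η)
      (1/2 * Real.sin (2*x) - (1/(4*K)) * ((A - B) * (2 * Real.cos (2*x)) + 2*(A+B))) x := by
    intro x
    have hc : HasDerivAt (fun y : ℝ => Real.cos (2*y)) (-Real.sin (2*x) * 2) x := by
      simpa [Function.comp_def] using (Real.hasDerivAt_cos (2*x)).comp x ((hasDerivAt_id x).const_mul 2)
    have hs : HasDerivAt (fun y : ℝ => Real.sin (2*y)) (Real.cos (2*x) * 2) x := by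
      simpa [Function.comp_def] using (Real.hasDerivAt_sin (2*x)).comp x ((hasDerivAt_id x).const_mul 2)
    have h : HasDerivAt (fun y : ℝ => -((1/4) * Real.cos (2*y) + (1/(4*K)) *
        ((A - B) * Real.sin (2*y) + 2*(A+B)*y)))
        (-((1/4) * (-Real.sin (2*x) * 2) + (1/(4*K)) *
        ((A - B) * (Real.cos (2*x) * 2) + 2*(A+B)*1))) x := by
      exact (((hc.const_mul (1/4)).add (((hs.const_mul (A-B)).add
        ((hasDerivAt_id x).const_mul (2*(A+B)))).const_mul (1/(4*K)))).neg)
    have heq : K0 w mb ms d α η = fun y => -((1/4) * Real.cos (2*y) + (1/(4*K)) *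
        ((A - B) * Real.sin (2*y) + 2*(A+B)*y)) := rfl
    rw [heq]
    convert h using 1
    ring
  refine fun ψ => ⟨?_, ?_⟩
  · have h := key ψ
    convert h using 1
    have h1 : Real.cos ψ ^ 2 = (1 + Real.cos (2*ψ))/2 := by
      rw [Real.cos_sq]; ring
    have h2 : Real.sin ψ ^ 2 = (1 - Real.cos (2*ψ))/2 := by
      rw [Real.sin_sq, h1]; ring
    simp only [M0plus, ← hK, ← hA, ← hB, h1, h2]
    field_simp
    ring
  · have h : HasDerivAt (fun t => K0 w mb ms d α η (-t)) _ ψ := (key (-ψ)).comp ψ (hasDerivAt_neg ψ)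
    convert h using 1
    have h1 : Real.cos ψ ^ 2 = (1 + Real.cos (2*ψ))/2 := by
      rw [Real.cos_sq]; ring
    have h2 : Real.sin ψ ^ 2 = (1 - Real.cos (2*ψ))/2 := by
      rw [Real.sin_sq, h1]; ring
    simp only [M0minus, ← hK, ← hA, ← hB, h1, h2, mul_neg, Real.sin_neg, Real.cos_neg]
    field_simp
    ring
end

section
/- Suppose k11(η) ≠ 0 and let I ⊆ ℝ be an interval. If (φ, Φ) : I → ℝ² is differentiable with φ'(t) = Φ(t) and Φ'(t) = M1(φ(t)) for all t ∈ I, and |φ(t)| ≤ α for all t ∈ I, then the pendulum energy E(t) = Φ(t)²/2 − (1/2)·cos(2·φ(t)) is constant on I. -/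
open Real

theorem M1_eq_neg_sin_two_mul {w mb ms d α η ψ : ℝ} (hα : α ≤ π / 2) (hψ : |ψ| ≤ α) :
    M1 w mb ms d α η ψ = -Real.sin (2 * ψ) := by
  obtain ⟨hψl, hψr⟩ := abs_le.mp hψ
  have h_minus : ψ ∈ Set.Icc (-α) (π - α) := ⟨hψl, by linarith⟩
  have h_plus : ψ ∈ Set.Icc (-π + α) α := ⟨by linarith, hψr⟩
  -- the `k20`, `k02` terms of the two panels cancel
  rw [M1, Set.indicator_of_mem h_minus, Set.indicator_of_mem h_plus, M0minus, M0plus]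
  ring

theorem Set.OrdConnected.eq_of_forall_hasDerivAt_zero {E : Type*} [NormedAddCommGroup E]
    [NormedSpace ℝ E] {I : Set ℝ} (hI : I.OrdConnected) {f : ℝ → E}
    (hf : ∀ t ∈ I, HasDerivAt f 0 t) {s t : ℝ} (hs : s ∈ I) (ht : t ∈ I) : f s = f t := by
  have h := hI.convex.norm_image_sub_le_of_norm_hasDerivWithin_le (C := 0)
    (fun x hx => (hf x hx).hasDerivWithinAt) (fun _ _ => by simp) ht hs
  rw [zero_mul, norm_le_zero_iff, sub_eq_zero] at h
  exact h

noncomputable def pendulumEnergy (φ Φ : ℝ → ℝ) (t : ℝ) : ℝ :=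
  Φ t ^ 2 / 2 - (1 / 2) * Real.cos (2 * φ t)

theorem hasDerivAt_pendulumEnergy {φ Φ : ℝ → ℝ} {t : ℝ} (hφ : HasDerivAt φ (Φ t) t)
    (hΦ : HasDerivAt Φ (-Real.sin (2 * φ t)) t) : HasDerivAt (pendulumEnergy φ Φ) 0 t := by
  have h : HasDerivAt (pendulumEnergy φ Φ) (2 * Φ t ^ 1 * -Real.sin (2 * φ t) / 2 -
      1 / 2 * (-Real.sin (2 * φ t) * (2 * Φ t))) t :=
    ((hΦ.pow 2).div_const 2).sub
      (((Real.hasDerivAt_cos _).comp t (hφ.const_mul 2)).const_mul (1 / 2))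
  exact h.congr_deriv (by ring)

theorem stmt12_general (w mb ms d α η : ℝ)
    (hα : α ∈ Set.Ioo 0 (π / 2))
    (I : Set ℝ) (hI : I.OrdConnected) (φ Φ : ℝ → ℝ)
    (hφ : ∀ t ∈ I, HasDerivAt φ (Φ t) t)
    (hΦ : ∀ t ∈ I, HasDerivAt Φ (M1 w mb ms d α η (φ t)) t)
    (hbound : ∀ t ∈ I, |φ t| ≤ α) :
    ∀ s ∈ I, ∀ t ∈ I,
      Φ s ^ 2 / 2 - (1 / 2) * Real.cos (2 * φ s) =
      Φ t ^ 2 / 2 - (1 / 2) * Real.cos (2 * φ t) := by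
  intro s hs t ht
  have h_torque : ∀ u ∈ I, M1 w mb ms d α η (φ u) = -Real.sin (2 * φ u) := fun u hu =>
    M1_eq_neg_sin_two_mul hα.2.le (hbound u hu)
  refine hI.eq_of_forall_hasDerivAt_zero (f := pendulumEnergy φ Φ) (fun u hu => ?_) hs ht
  exact hasDerivAt_pendulumEnergy (hφ u hu) (h_torque u hu ▸ hΦ u hu)

theorem stmt12 (w mb ms d α η : ℝ) (hw : 0 < w) (hmb : 0 < mb) (hms : 0 < ms)
    (hα : α ∈ Set.Ioo 0 (π / 2)) (hη : η ∈ Set.Ioo (0:ℝ) 1)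
    (hk : k11 w mb ms d α η ≠ 0)
    (I : Set ℝ) (hI : I.OrdConnected) (φ Φ : ℝ → ℝ)
    (hφ : ∀ t ∈ I, HasDerivAt φ (Φ t) t)
    (hΦ : ∀ t ∈ I, HasDerivAt Φ (M1 w mb ms d α η (φ t)) t)
    (hbound : ∀ t ∈ I, |φ t| ≤ α) :
    ∀ s ∈ I, ∀ t ∈ I,
      Φ s ^ 2 / 2 - (1 / 2) * Real.cos (2 * φ s) =
      Φ t ^ 2 / 2 - (1 / 2) * Real.cos (2 * φ t) :=
  stmt12_general w mb ms d α η hα I hI φ Φ hφ hΦ hbound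
end

section
/- (Stability of the sun-pointing attitude.) Suppose d > (w·(m_b + m_s)/(2·m_b))·K(α, η), where K(α, η) = (η·cos(3α) − cos α)/(2η·cos(2α) + η + 1), so that k11(η) > 0, and let c > 0. Then the equilibrium (0, 0) of the planar attitude system φ' = Φ, Φ' = c·k11(η)·M1(φ) is Lyapunov stable: for every ε > 0 there exists δ > 0 such that every differentiable solution (φ, Φ) : [0, ∞) → ℝ² of this system with φ(0)² + Φ(0)² < δ² satisfies φ(t)² + Φ(t)² < ε² for all t ≥ 0. -/
open Real

/-- The quotient `K(α, η)`. -/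
noncomputable def Kfun (α η : ℝ) : ℝ :=
  (η * Real.cos (3 * α) - Real.cos α) / (2 * η * Real.cos (2 * α) + η + 1)

lemma one_sub_cos_two_mul_le (x : ℝ) : 1 - Real.cos (2*x) ≤ 2 * x^2 := by
  have h := Real.sin_sq_le_sq (x := x)
  have h2 := Real.sin_sq_eq_half_sub (x := x)
  nlinarith

lemma le_one_sub_cos_two_mul {x : ℝ} (hx : |x| ≤ 1) : x^2 ≤ 1 - Real.cos (2*x) := by
  have h2 := Real.sin_sq_eq_half_sub (x := x)
  have main : ∀ y : ℝ, 0 < y → y ≤ 1 → y^2 ≤ 2 * Real.sin y ^ 2 := by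
    intro y hy hy1
    have hy2 : y^2 ≤ 1 := by nlinarith
    have hy3 : y^3 ≤ y := by nlinarith [mul_le_mul_of_nonneg_left hy2 hy.le]
    have hpos : (3/4)*y < Real.sin y := by
      have := Real.sin_gt_sub_cube hy; linarith
    nlinarith [mul_lt_mul_of_pos_right hpos (show (0:ℝ) < (3/4)*y by positivity),
      sq_nonneg (Real.sin y - 3/4*y)]
  have key : x^2 ≤ 2 * Real.sin x ^ 2 := by
    rcases lt_trichotomy x 0 with h | h | h
    · have h1' : -x ≤ 1 := by rw [abs_of_neg h] at hx; exact hx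
      have := main (-x) (by linarith) h1'
      rw [Real.sin_neg] at this; nlinarith
    · simp [h]
    · exact main x h (by rwa [abs_of_pos h] at hx)
  linarith

lemma k11_pos (w mb ms d α η : ℝ) (hmb : 0 < mb)
    (hα : α ∈ Set.Ioo 0 (π / 2)) (hη : η ∈ Set.Ioo (0:ℝ) 1)
    (hd : d > (w * (mb + ms) / (2 * mb)) * Kfun α η) :
    0 < k11 w mb ms d α η := by
  obtain ⟨hα0, hα2⟩ := hα
  obtain ⟨hη0, hη1⟩ := hη
  have hπ := Real.pi_pos
  have hsin : 0 < Real.sin α := Real.sin_pos_of_pos_of_lt_pi hα0 (by linarith)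
  have hD : 0 < 2 * η * Real.cos (2 * α) + η + 1 := by
    nlinarith [Real.neg_one_le_cos (2 * α)]
  rw [Kfun, div_mul_div_comm, gt_iff_lt, div_lt_iff₀ (by positivity)] at hd
  rw [k11]
  apply mul_pos hsin
  nlinarith [hd]

lemma M1_eq_on (w mb ms d α η : ℝ) (hα : α ∈ Set.Ioo 0 (π/2)) {ψ : ℝ} (hψ : |ψ| ≤ α) :
    M1 w mb ms d α η ψ = - Real.sin (2*ψ) := by
  obtain ⟨hα0, hα2⟩ := hα
  have hπ := Real.pi_pos
  rw [abs_le] at hψ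
  have h1 : ψ ∈ Set.Icc (-α) (π - α) := ⟨hψ.1, by linarith [hψ.2]⟩
  have h2 : ψ ∈ Set.Icc (-π + α) α := ⟨by linarith [hψ.1], hψ.2⟩
  rw [M1, Set.indicator_of_mem h1, Set.indicator_of_mem h2, M0minus, M0plus]
  ring

theorem stmt13 (w mb ms d α η c : ℝ) (hw : 0 < w) (hmb : 0 < mb) (hms : 0 < ms)
    (hα : α ∈ Set.Ioo 0 (π / 2)) (hη : η ∈ Set.Ioo (0:ℝ) 1)
    (hd : d > (w * (mb + ms) / (2 * mb)) * Kfun α η)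
    (hc : 0 < c) :
    ∀ ε > 0, ∃ δ > 0, ∀ φ Φ : ℝ → ℝ,
      (∀ t ≥ (0:ℝ), HasDerivAt φ (Φ t) t) →
      (∀ t ≥ (0:ℝ), HasDerivAt Φ (c * k11 w mb ms d α η * M1 w mb ms d α η (φ t)) t) →
      φ 0 ^ 2 + Φ 0 ^ 2 < δ ^ 2 →
      ∀ t ≥ (0:ℝ), φ t ^ 2 + Φ t ^ 2 < ε ^ 2 := by
  set k : ℝ := c * k11 w mb ms d α η with hkdef
  have hk : 0 < k := mul_pos hc (k11_pos w mb ms d α η hmb hα hη hd)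
  intro ε hε
  set ε₁ : ℝ := min 1 (min (ε/2) α) with hε₁def
  have hε₁0 : 0 < ε₁ := lt_min one_pos (lt_min (by linarith) hα.1)
  have hε₁1 : ε₁ ≤ 1 := min_le_left _ _
  have hε₁ε : ε₁ ≤ ε/2 := (min_le_right _ _).trans (min_le_left _ _)
  have hε₁α : ε₁ ≤ α := (min_le_right _ _).trans (min_le_right _ _)
  set L : ℝ := min k 1 * ε₁^2 with hLdef
  have hL : 0 < L := mul_pos (lt_min hk one_pos) (by positivity)
  have hM : (0:ℝ) < max 1 (2*k) := lt_max_iff.2 (Or.inl one_pos)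
  refine ⟨Real.sqrt (L / max 1 (2*k)), Real.sqrt_pos.2 (by positivity), ?_⟩
  intro φ Φ hφ hΦ h0 t ht
  rw [Real.sq_sqrt (by positivity)] at h0
  set E : ℝ → ℝ := fun s => Φ s ^ 2 + k * (1 - Real.cos (2 * φ s)) with hEdef
  -- derivative of the energy
  have hEderiv : ∀ s, 0 ≤ s →
      HasDerivAt E (2 * Φ s * (k * M1 w mb ms d α η (φ s))
        + k * (Real.sin (2 * φ s) * (2 * Φ s))) s := by
    intro s hs
    have h1 : HasDerivAt (fun u => Φ u ^ 2)
        (2 * Φ s * (k * M1 w mb ms d α η (φ s))) s := by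
      have : HasDerivAt (fun u => Φ u ^ 2) _ s := (hΦ s hs).pow 2
      convert this using 1
      rw [hkdef]; push_cast; ring
    have hc2 : HasDerivAt (fun u => Real.cos (2 * φ u))
        (-Real.sin (2 * φ s) * (2 * Φ s)) s := ((hφ s hs).const_mul 2).cos
    have h2 : HasDerivAt (fun u => k * (1 - Real.cos (2 * φ u)))
        (k * (Real.sin (2 * φ s) * (2 * Φ s))) s := by
      have : HasDerivAt (fun u => k * (1 - Real.cos (2 * φ u))) _ s :=
        ((hasDerivAt_const s (1:ℝ)).sub hc2).const_mul k
      convert this using 1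
      ring
    exact h1.add h2
  have hEderiv0 : ∀ s, 0 ≤ s → |φ s| ≤ α → HasDerivAt E 0 s := by
    intro s hs hφs
    have h := hEderiv s hs
    rw [M1_eq_on w mb ms d α η hα hφs] at h
    convert h using 1
    ring
  have hEconst : ∀ b, 0 ≤ b → (∀ s ∈ Set.Ico (0:ℝ) b, |φ s| ≤ α) → E b = E 0 := by
    intro b hb hball
    have hcont : ContinuousOn E (Set.Icc 0 b) := fun s hs =>
      ((hEderiv s hs.1).continuousAt).continuousWithinAt
    exact constant_of_has_deriv_right_zero hcont
      (fun s hs => (hEderiv0 s hs.1 (hball s hs)).hasDerivWithinAt)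
      b (Set.mem_Icc.2 ⟨hb, le_refl b⟩)
  have hE0 : E 0 < L := by
    have h1 : 1 - Real.cos (2 * φ 0) ≤ 2 * (φ 0)^2 := one_sub_cos_two_mul_le _
    have hub : E 0 ≤ max 1 (2*k) * (φ 0 ^ 2 + Φ 0 ^ 2) := by
      have ha : (1:ℝ) ≤ max 1 (2*k) := le_max_left _ _
      have hb : 2*k ≤ max 1 (2*k) := le_max_right _ _
      simp only [hEdef]
      nlinarith [sq_nonneg (φ 0), sq_nonneg (Φ 0),
        mul_le_mul_of_nonneg_left h1 hk.le]
    calc E 0 ≤ max 1 (2*k) * (φ 0 ^ 2 + Φ 0 ^ 2) := hub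
      _ < max 1 (2*k) * (L / max 1 (2*k)) := by
          exact mul_lt_mul_of_pos_left h0 hM
      _ = L := by field_simp
  have hLM : L / max 1 (2*k) ≤ ε₁^2 := by
    rw [div_le_iff₀ hM]
    nlinarith [min_le_right k 1, le_max_left 1 (2*k), sq_nonneg ε₁]
  have habs_of_sq : ∀ x : ℝ, x^2 < ε₁^2 → |x| < ε₁ := by
    intro x hx
    have := Real.sqrt_lt_sqrt (sq_nonneg x) hx
    rwa [Real.sqrt_sq_eq_abs, Real.sqrt_sq hε₁0.le] at this
  have hφ00 : |φ 0| < ε₁ := by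
    apply habs_of_sq
    nlinarith [sq_nonneg (Φ 0)]
  -- the angle stays below ε₁ for all nonnegative times
  have hsmall : ∀ s, 0 ≤ s → |φ s| < ε₁ := by
    by_contra hcon
    push_neg at hcon
    obtain ⟨s₀, hs₀, hs₀'⟩ := hcon
    set B : Set ℝ := {s : ℝ | 0 ≤ s ∧ ε₁ ≤ |φ s|} with hBdef
    have hBne : B.Nonempty := ⟨s₀, hs₀, hs₀'⟩
    have hBbd : BddBelow B := ⟨0, fun x hx => hx.1⟩
    have hφcont : ContinuousOn φ (Set.Ici (0:ℝ)) := fun s hs =>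
      ((hφ s hs).continuousAt).continuousWithinAt
    have hBclosed : IsClosed B := by
      have hset : B = Set.Ici (0:ℝ) ∩ φ ⁻¹' ((fun x : ℝ => |x|) ⁻¹' Set.Ici ε₁) := by
        ext x
        simp [hBdef, Set.mem_Ici, and_comm]
      rw [hset]
      exact hφcont.preimage_isClosed_of_isClosed isClosed_Ici
        (isClosed_Ici.preimage continuous_abs)
    set t₀ : ℝ := sInf B with ht₀def
    have ht₀B : t₀ ∈ B := hBclosed.csInf_mem hBne hBbd
    have ht₀0 : 0 ≤ t₀ := ht₀B.1
    have ht₀pos : 0 < t₀ := by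
      rcases eq_or_lt_of_le ht₀0 with h | h
      · exfalso
        have h2 := ht₀B.2
        rw [← h] at h2
        exact absurd h2 (not_le.2 hφ00)
      · exact h
    have hlt : ∀ s, 0 ≤ s → s < t₀ → |φ s| < ε₁ := by
      intro s h1 h2
      by_contra hge
      push_neg at hge
      exact absurd (csInf_le hBbd ⟨h1, hge⟩) (not_le.2 h2)
    have hub : |φ t₀| ≤ ε₁ := by
      have htend : Filter.Tendsto (fun s => |φ s|) (nhdsWithin t₀ (Set.Iio t₀))
          (nhds |φ t₀|) :=
        (((hφ t₀ ht₀0).continuousAt).abs).continuousWithinAt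
      refine le_of_tendsto htend ?_
      filter_upwards [Ioo_mem_nhdsLT_of_mem (Set.mem_Ioc.2 ⟨ht₀pos, le_refl t₀⟩)]
        with s hs
      exact (hlt s hs.1.le hs.2).le
    have hEt₀ : E t₀ = E 0 :=
      hEconst t₀ ht₀0 (fun s hs => (hlt s hs.1 hs.2).le.trans hε₁α)
    have heq : |φ t₀| = ε₁ := le_antisymm hub ht₀B.2
    have hlow : ε₁^2 ≤ 1 - Real.cos (2 * φ t₀) := by
      have h1 : |φ t₀| ≤ 1 := heq.le.trans hε₁1
      have h2 := le_one_sub_cos_two_mul h1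
      have h3 : φ t₀ ^ 2 = ε₁ ^ 2 := by rw [← sq_abs, heq]
      linarith
    have hge : L ≤ E t₀ := by
      have h1 : k * ε₁^2 ≤ k * (1 - Real.cos (2 * φ t₀)) :=
        mul_le_mul_of_nonneg_left hlow hk.le
      have h2 : L ≤ k * ε₁^2 := mul_le_mul_of_nonneg_right (min_le_left k 1) (sq_nonneg _)
      have h3 : (0:ℝ) ≤ Φ t₀ ^ 2 := sq_nonneg _
      simp only [hEdef]
      linarith
    rw [hEt₀] at hge
    linarith
  -- conclusion
  have hEt : E t = E 0 := hEconst t ht (fun s hs => (hsmall s hs.1).le.trans hε₁α)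
  have hcos1 : Real.cos (2 * φ t) ≤ 1 := Real.cos_le_one _
  have hΦt : Φ t ^ 2 < L := by
    have h1 : E t < L := by rw [hEt]; exact hE0
    have h2 : 0 ≤ k * (1 - Real.cos (2 * φ t)) := by
      apply mul_nonneg hk.le; linarith
    simp only [hEdef] at h1
    linarith
  have hLe : L ≤ ε₁^2 := by
    have := mul_le_mul_of_nonneg_right (min_le_right k 1) (sq_nonneg ε₁)
    simpa using this
  have hφt : φ t ^ 2 < ε₁^2 := by
    have h1 := hsmall t ht
    have h2 : |φ t| ^ 2 < ε₁ ^ 2 := by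
      exact pow_lt_pow_left₀ h1 (abs_nonneg _) two_ne_zero
    rwa [sq_abs] at h2
  nlinarith [hε₁ε, hε₁0, hε]
end
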